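/- arXiv:1610.03415 — 4 statements merged into one kernel-verified Lean document; each statement's English description precedes it below -/
import Mathlib

section
/- Let κ be a Markov kernel on a Polish space X which is strong Feller, and let μ and ν be two ergodic invariant probability measures for κ with μ ≠ ν. Then the topological supports of μ and ν are disjoint: supp μ ∩ supp ν = ∅. -/
open MeasureTheory ProbabilityTheory

/-- A Markov kernel is *strong Feller* if it maps bounded Borel measurable functions to
bounded continuous functions. -/
def IsStrongFeller {X : Type*} [TopologicalSpace X] [MeasurableSpace X]
    (κ : Kernel X X) : Prop :=
  ∀ ψ : X → ℝ, Measurable ψ → (∃ C, ∀ x, |ψ x| ≤ C) →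
    Continuous fun x => ∫ y, ψ y ∂(κ x)

/-- A measure `μ` is *invariant* for the kernel `κ` if `μ A = ∫ κ(x, A) μ(dx)` for every
Borel set `A`. -/
def KernelInvariant {X : Type*} [MeasurableSpace X] (κ : Kernel X X) (μ : Measure X) : Prop :=
  ∀ A : Set X, MeasurableSet A → μ A = ∫⁻ x, κ x A ∂μ

/-- An invariant measure `μ` is *ergodic* for `κ` if every Borel set `A` with
`κ(x, A) = 1` for `μ`-almost every `x ∈ A` satisfies `μ A ∈ {0, 1}`. -/
def KernelErgodic {X : Type*} [MeasurableSpace X] (κ : Kernel X X) (μ : Measure X) : Prop :=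
  ∀ A : Set X, MeasurableSet A → (∀ᵐ x ∂μ, x ∈ A → κ x A = 1) → μ A = 0 ∨ μ A = 1

/-- The topological support of a measure: the set of points all of whose open
neighbourhoods have positive measure (the smallest closed set of full measure). -/
def measureSupport {X : Type*} [TopologicalSpace X] [MeasurableSpace X]
    (μ : Measure X) : Set X :=
  {x | ∀ U : Set X, IsOpen U → x ∈ U → 0 < μ U}

/-!
Let `ρ = μ + ν` and let `f`, `g` be the densities of `μ`, `ν` with respect to `ρ`. Comparing the
balance of mass flowing into and out of `A = {g < f}` under the two invariant measures shows that
`κ` cannot move mass out of `A` from `ρ`-almost every point of `A`. By ergodicity `μ A ∈ {0, 1}`,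
and `μ A = 0` would give `f ≤ g`, i.e. `μ ≤ ν`, hence `μ = ν`; so `μ A = 1`, and symmetrically
`ν {f < g} = 1`. Thus `x ↦ κ(x, A)` equals `1` `μ`-a.e. and `0` `ν`-a.e., and it is continuous by
the strong Feller property, so it would take both values at a common point of the supports.
-/

open scoped ENNReal

section

variable {X : Type*} [MeasurableSpace X]

theorem setLIntegral_kernel_ne_top {Y : Type*} [MeasurableSpace Y] (κ : Kernel X Y)
    [IsFiniteKernel κ] (σ : Measure X) [IsFiniteMeasure σ] (S : Set X) (T : Set Y) :
    ∫⁻ x in S, κ x T ∂σ ≠ ⊤ := by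
  refine ne_of_lt ?_
  calc ∫⁻ x in S, κ x T ∂σ ≤ ∫⁻ _ in S, κ.bound ∂σ :=
        setLIntegral_mono measurable_const fun x _ => κ.measure_le_bound x T
    _ = κ.bound * σ S := setLIntegral_const _ _
    _ < ⊤ := ENNReal.mul_lt_top κ.bound_lt_top (measure_lt_top σ S)

theorem KernelInvariant.setLIntegral_compl_eq {κ : Kernel X X} [IsMarkovKernel κ]
    {σ : Measure X} [IsFiniteMeasure σ] (hσ : KernelInvariant κ σ) {A : Set X}
    (hA : MeasurableSet A) :
    ∫⁻ x in Aᶜ, κ x A ∂σ = ∫⁻ x in A, κ x Aᶜ ∂σ := by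
  refine (ENNReal.add_right_inj (setLIntegral_kernel_ne_top κ σ A A)).1 ?_
  calc ∫⁻ x in A, κ x A ∂σ + ∫⁻ x in Aᶜ, κ x A ∂σ = σ A := by
        rw [lintegral_add_compl _ hA, hσ A hA]
    _ = ∫⁻ x in A, (κ x A + κ x Aᶜ) ∂σ := by simp [measure_add_measure_compl hA]
    _ = ∫⁻ x in A, κ x A ∂σ + ∫⁻ x in A, κ x Aᶜ ∂σ :=
        lintegral_add_left (κ.measurable_coe hA) _

theorem KernelInvariant.ae_kernel_eq_one_of_density_lt {κ : Kernel X X} [IsMarkovKernel κ]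
    {μ ν ρ : Measure X} [IsFiniteMeasure μ] [IsFiniteMeasure ν]
    (hμ : KernelInvariant κ μ) (hν : KernelInvariant κ ν) {f g : X → ℝ≥0∞}
    (hf : Measurable f) (hg : Measurable g)
    (hμf : μ = ρ.withDensity f) (hνg : ν = ρ.withDensity g) :
    ∀ᵐ x ∂ρ, x ∈ {x | g x < f x} → κ x {x | g x < f x} = 1 := by
  set A := {x | g x < f x}
  have hA : MeasurableSet A := measurableSet_lt hg hf
  have hκA : Measurable fun x => κ x A := κ.measurable_coe hA
  have hκAc : Measurable fun x => κ x Aᶜ := κ.measurable_coe hA.compl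
  have hden : ∀ {d : X → ℝ≥0∞}, Measurable d → ∀ {S : Set X}, MeasurableSet S →
      ∀ {F : X → ℝ≥0∞}, Measurable F →
      ∫⁻ x in S, F x ∂ρ.withDensity d = ∫⁻ x in S, d x * F x ∂ρ :=
    fun hd _ hS _ hF => setLIntegral_withDensity_eq_setLIntegral_mul ρ hd hF hS
  have hflux : ∀ (σ : Measure X) [IsFiniteMeasure σ] (d : X → ℝ≥0∞), Measurable d →
      KernelInvariant κ σ → σ = ρ.withDensity d →
      ∫⁻ x in A, d x * κ x Aᶜ ∂ρ = ∫⁻ x in Aᶜ, d x * κ x A ∂ρ := by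
    intro σ _ d hd hσ hσd
    rw [← hden hd hA hκAc, ← hden hd hA.compl hκA, ← hσd, hσ.setLIntegral_compl_eq hA]
  have hle : ∫⁻ x in A, f x * κ x Aᶜ ∂ρ ≤ ∫⁻ x in A, g x * κ x Aᶜ ∂ρ :=
    calc ∫⁻ x in A, f x * κ x Aᶜ ∂ρ = ∫⁻ x in Aᶜ, f x * κ x A ∂ρ := hflux μ f hf hμ hμf
      _ ≤ ∫⁻ x in Aᶜ, g x * κ x A ∂ρ := setLIntegral_mono (hg.mul hκA) fun x hx =>
          mul_le_mul_left (not_lt.1 (show ¬ g x < f x from hx)) _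
      _ = ∫⁻ x in A, g x * κ x Aᶜ ∂ρ := (hflux ν g hg hν hνg).symm
  have hfin : ∫⁻ x in A, g x * κ x Aᶜ ∂ρ ≠ ⊤ := by
    rw [← hden hg hA hκAc, ← hνg]
    exact setLIntegral_kernel_ne_top κ ν A Aᶜ
  have heq : (fun x => g x * κ x Aᶜ) =ᵐ[ρ.restrict A] fun x => f x * κ x Aᶜ :=
    ae_eq_of_ae_le_of_lintegral_le
      (ae_restrict_of_forall_mem hA fun x hx => mul_le_mul_left (le_of_lt hx) _)
      hfin (hf.mul hκAc).aemeasurable hle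
  filter_upwards [(ae_restrict_iff' hA).1 heq] with x hx hxA
  rw [← prob_compl_eq_zero_iff hA]
  by_contra h0
  exact (hx hxA).not_lt (ENNReal.mul_lt_mul_left h0 (measure_ne_top _ _) hxA)

theorem KernelErgodic.measure_density_lt_eq_one {κ : Kernel X X} [IsMarkovKernel κ]
    {μ ν ρ : Measure X} [IsProbabilityMeasure μ] [IsProbabilityMeasure ν]
    (hμerg : KernelErgodic κ μ) (hμ : KernelInvariant κ μ) (hν : KernelInvariant κ ν)
    (hne : μ ≠ ν) {f g : X → ℝ≥0∞} (hf : Measurable f) (hg : Measurable g)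
    (hμf : μ = ρ.withDensity f) (hνg : ν = ρ.withDensity g) :
    μ {x | g x < f x} = 1 := by
  have hμρ : μ ≪ ρ := hμf ▸ withDensity_absolutelyContinuous ρ f
  refine (hμerg _ (measurableSet_lt hg hf) (hμρ.ae_le
    (hμ.ae_kernel_eq_one_of_density_lt hν hf hg hμf hνg))).resolve_left fun h0 => hne ?_
  have hfg : f ≤ᵐ[ρ] g := by
    rw [measure_eq_zero_iff_ae_notMem, hμf, ae_withDensity_iff hf] at h0
    filter_upwards [h0] with x hx
    by_cases hx0 : f x = 0
    · simp [hx0]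
    · exact not_lt.1 (hx hx0)
  refine Measure.eq_of_le_of_measure_univ_eq ?_ (by simp)
  rw [hμf, hνg]
  exact withDensity_mono hfg

theorem KernelErgodic.exists_ae_kernel_eq_one_ae_kernel_eq_zero {κ : Kernel X X}
    [IsMarkovKernel κ] {μ ν : Measure X} [IsProbabilityMeasure μ] [IsProbabilityMeasure ν]
    (hμinv : KernelInvariant κ μ) (hμerg : KernelErgodic κ μ)
    (hνinv : KernelInvariant κ ν) (hνerg : KernelErgodic κ ν) (hne : μ ≠ ν) :
    ∃ A, MeasurableSet A ∧ (∀ᵐ x ∂μ, κ x A = 1) ∧ ∀ᵐ x ∂ν, κ x A = 0 := by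
  set ρ := μ + ν
  set f := μ.rnDeriv ρ
  set g := ν.rnDeriv ρ
  have hμρ : μ ≪ ρ := (Measure.le_add_right le_rfl).absolutelyContinuous
  have hνρ : ν ≪ ρ := (Measure.le_add_left le_rfl).absolutelyContinuous
  have hμf : μ = ρ.withDensity f := (Measure.withDensity_rnDeriv_eq μ ρ hμρ).symm
  have hνg : ν = ρ.withDensity g := (Measure.withDensity_rnDeriv_eq ν ρ hνρ).symm
  have hf : Measurable f := Measure.measurable_rnDeriv μ ρ
  have hg : Measurable g := Measure.measurable_rnDeriv ν ρ
  have hμA := hμerg.measure_density_lt_eq_one hμinv hνinv hne hf hg hμf hνg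
  have hνB := hνerg.measure_density_lt_eq_one hνinv hμinv hne.symm hg hf hνg hμf
  have hAinv := hμinv.ae_kernel_eq_one_of_density_lt hνinv hf hg hμf hνg
  have hBinv := hνinv.ae_kernel_eq_one_of_density_lt hμinv hg hf hνg hμf
  refine ⟨{x | g x < f x}, measurableSet_lt hg hf, ?_, ?_⟩
  · filter_upwards [hμρ.ae_le hAinv, ae_iff.2 ((prob_compl_eq_zero_iff
      (measurableSet_lt hg hf)).2 hμA)] with x hx hxA using hx hxA
  · filter_upwards [hνρ.ae_le hBinv, ae_iff.2 ((prob_compl_eq_zero_iff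
      (measurableSet_lt hf hg)).2 hνB)] with x hx hxB
    rw [← prob_compl_eq_zero_iff (measurableSet_lt hf hg)] at hx
    exact measure_mono_null
      (fun y (hy : g y < f y) => show y ∈ {a | f a < g a}ᶜ from not_lt.2 hy.le) (hx hxB)

theorem IsStrongFeller.continuous_measureReal [TopologicalSpace X] {κ : Kernel X X}
    (hκ : IsStrongFeller κ) {A : Set X} (hA : MeasurableSet A) :
    Continuous fun x => (κ x).real A := by
  have hbdd : ∃ C, ∀ x, |A.indicator (1 : X → ℝ) x| ≤ C :=
    ⟨1, fun x => by by_cases hx : x ∈ A <;> simp [hx]⟩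
  simpa only [integral_indicator_one hA] using hκ _ (measurable_one.indicator hA) hbdd

theorem eq_of_mem_measureSupport [TopologicalSpace X] {Y : Type*} [TopologicalSpace Y]
    [T1Space Y] {μ : Measure X} {φ : X → Y} (hφ : Continuous φ) {y : Y}
    (h : ∀ᵐ x ∂μ, φ x = y) {x : X} (hx : x ∈ measureSupport μ) : φ x = y := by
  by_contra hne
  exact (hx _ (isOpen_compl_singleton.preimage hφ) hne).ne' (ae_iff.1 h)

end

theorem disjoint_support_of_ergodic_of_strongFeller_general
    {X : Type*} [TopologicalSpace X] [MeasurableSpace X]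
    (κ : Kernel X X) [IsMarkovKernel κ] (hSF : IsStrongFeller κ)
    (μ ν : Measure X) [IsProbabilityMeasure μ] [IsProbabilityMeasure ν]
    (hμinv : KernelInvariant κ μ) (hμerg : KernelErgodic κ μ)
    (hνinv : KernelInvariant κ ν) (hνerg : KernelErgodic κ ν)
    (hne : μ ≠ ν) :
    measureSupport μ ∩ measureSupport ν = ∅ := by
  obtain ⟨A, hA, hμA, hνA⟩ :=
    hμerg.exists_ae_kernel_eq_one_ae_kernel_eq_zero hμinv hνinv hνerg hne
  have hcont := hSF.continuous_measureReal hA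
  refine Set.eq_empty_of_forall_notMem fun z ⟨hzμ, hzν⟩ => ?_
  have h1 : (κ z).real A = 1 :=
    eq_of_mem_measureSupport hcont (hμA.mono fun x hx => by simp [measureReal_def, hx]) hzμ
  have h0 : (κ z).real A = 0 :=
    eq_of_mem_measureSupport hcont (hνA.mono fun x hx => by simp [measureReal_def, hx]) hzν
  exact one_ne_zero (h1.symm.trans h0)

/-- Two distinct ergodic invariant probability measures of a strong
Feller Markov kernel on a Polish space have disjoint topological supports. -/
theorem disjoint_support_of_ergodic_of_strongFeller
    {X : Type*} [TopologicalSpace X] [PolishSpace X] [MeasurableSpace X] [BorelSpace X]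
    (κ : Kernel X X) [IsMarkovKernel κ] (hSF : IsStrongFeller κ)
    (μ ν : Measure X) [IsProbabilityMeasure μ] [IsProbabilityMeasure ν]
    (hμinv : KernelInvariant κ μ) (hμerg : KernelErgodic κ μ)
    (hνinv : KernelInvariant κ ν) (hνerg : KernelErgodic κ ν)
    (hne : μ ≠ ν) :
    measureSupport μ ∩ measureSupport ν = ∅ :=
  disjoint_support_of_ergodic_of_strongFeller_general κ hSF μ ν hμinv hμerg hνinv hνerg hne
end

section
/- Let U be a Polish space, let Ū = U ⊔ {†} be the Polish space obtained from U by adjoining an isolated point † ('death state'), and let κ be a Markov kernel on Ū that is strong Feller, absorbing at † (i.e. κ(†,{†}) = 1), and irreducible on U in the sense that κ(u, A) > 0 for every u ∈ U and every nonempty open set A ⊆ U. Then κ admits at most one invariant probability measure μ with μ(U) = 1. -/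
/-!
If `μ ≠ ν` are invariant, then so are the parts `μ - ν` and `ν - μ` of their difference:
`μ ≤ (μ - ν) + ν` gives `μ - ν ≤ κ ∘ₘ (μ - ν)`, and both sides have the same mass. These
parts are nonzero, carried by `U`, and mutually singular, carried by disjoint sets `S` and `Sᶜ`.
An invariant measure carried by `B` satisfies `κ(x, B) = 1` for almost every `x`; by the strong
Feller property the points of `U` where this fails form an open null set, which by irreducibility
is empty. Hence `κ(x, S) = κ(x, Sᶜ) = 1` for `x ∈ U`, which is absurd.
-/

open MeasureTheory ProbabilityTheory

lemma MeasureTheory.Measure.comp_mono {X Y : Type*} [MeasurableSpace X] [MeasurableSpace Y]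
    (κ : Kernel X Y) {μ ν : Measure X} (h : μ ≤ ν) : κ ∘ₘ μ ≤ κ ∘ₘ ν :=
  Measure.le_iff.mpr fun A hA => by
    rw [Measure.bind_apply hA κ.aemeasurable, Measure.bind_apply hA κ.aemeasurable]
    exact lintegral_mono' h le_rfl

lemma MeasureTheory.Measure.sub_apply_pos_of_ne {X : Type*} [MeasurableSpace X]
    {μ ν : Measure X} [IsFiniteMeasure μ] [IsFiniteMeasure ν] (hne : μ ≠ ν)
    (huniv : μ Set.univ = ν Set.univ) {s : Set X} (hs : μ sᶜ = 0) : 0 < (μ - ν) s := by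
  refine pos_iff_ne_zero.mpr fun h => hne ?_
  have hsub : μ - ν = 0 := by
    rw [← Measure.measure_univ_eq_zero, ← Set.union_compl_self s]
    exact measure_union_null h
      (nonpos_iff_eq_zero.mp ((Measure.le_iff'.mp Measure.sub_le sᶜ).trans hs.le))
  have hle : μ ≤ ν := by simpa using Measure.sub_le_iff_le_add.mp hsub.le
  exact Measure.eq_of_le_of_measure_univ_eq hle huniv

namespace KernelInvariant

variable {X : Type*} [MeasurableSpace X] {κ : Kernel X X} {μ ν : Measure X}

lemma iff_comp_eq : KernelInvariant κ μ ↔ κ ∘ₘ μ = μ := by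
  refine ⟨fun h => Measure.ext fun A hA => ?_, fun h A hA => ?_⟩
  · rw [Measure.bind_apply hA κ.aemeasurable, h A hA]
  · rw [← Measure.bind_apply hA κ.aemeasurable, h]

lemma sub [IsMarkovKernel κ] [IsFiniteMeasure μ] [IsFiniteMeasure ν]
    (hμ : KernelInvariant κ μ) (hν : KernelInvariant κ ν) : KernelInvariant κ (μ - ν) := by
  rw [iff_comp_eq] at *
  have hle : μ - ν ≤ κ ∘ₘ (μ - ν) := by
    refine Measure.sub_le_of_le_add ?_
    calc μ = κ ∘ₘ μ := hμ.symm
      _ ≤ κ ∘ₘ (μ - ν + ν) := Measure.comp_mono κ (Measure.sub_le_iff_le_add.mp le_rfl)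
      _ = κ ∘ₘ (μ - ν) + ν := by rw [Measure.comp_add, hν]
  exact (Measure.eq_of_le_of_measure_univ_eq hle Measure.comp_apply_univ.symm).symm

lemma measure_pos_of_forall_mem_pos (hμ : KernelInvariant κ μ) {O V : Set X}
    (hV : MeasurableSet V) (hO : 0 < μ O) (hOV : ∀ x ∈ O, 0 < κ x V) : 0 < μ V := by
  rw [hμ V hV, lintegral_pos_iff_support (κ.measurable_coe hV)]
  exact hO.trans_le (measure_mono fun x hx => (hOV x hx).ne')

lemma ae_kernel_apply_eq_one [IsMarkovKernel κ] (hμ : KernelInvariant κ μ) {B : Set X}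
    (hB : MeasurableSet B) (hμB : μ Bᶜ = 0) : ∀ᵐ x ∂μ, κ x B = 1 := by
  rw [hμ _ hB.compl, lintegral_eq_zero_iff (κ.measurable_coe hB.compl)] at hμB
  filter_upwards [hμB] with x hx
  exact (prob_compl_eq_zero_iff hB).mp hx

end KernelInvariant

namespace IsStrongFeller

variable {X : Type*} [TopologicalSpace X] [MeasurableSpace X] {κ : Kernel X X}

lemma continuous_measureReal_s2 (hκ : IsStrongFeller κ) {B : Set X} (hB : MeasurableSet B) :
    Continuous fun x => (κ x).real B := by
  have hψ : ∃ C, ∀ x, |B.indicator (1 : X → ℝ) x| ≤ C :=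
    ⟨1, fun x => by by_cases hx : x ∈ B <;> simp [hx]⟩
  simpa only [integral_indicator_one hB] using hκ (B.indicator 1) (measurable_one.indicator hB) hψ

lemma apply_eq_one_of_invariant [OpensMeasurableSpace X] [IsMarkovKernel κ]
    (hκ : IsStrongFeller κ) {O : Set X} (hO : IsOpen O)
    (hirr : ∀ x ∈ O, ∀ V : Set X, IsOpen V → V ⊆ O → V.Nonempty → 0 < κ x V)
    {μ : Measure X} (hμ : KernelInvariant κ μ) (hμO : 0 < μ O)
    {B : Set X} (hB : MeasurableSet B) (hμB : μ Bᶜ = 0) : ∀ x ∈ O, κ x B = 1 := by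
  have hreal : ∀ x, (κ x).real B = 1 ↔ κ x B = 1 := fun x => ENNReal.toReal_eq_one_iff _
  set V := O ∩ {x | (κ x).real B ≠ 1}
  have hV : IsOpen V :=
    hO.inter (isOpen_ne_fun (hκ.continuous_measureReal_s2 hB) continuous_const)
  have hμV : μ V = 0 := by
    refine measure_mono_null (fun x hx => ?_) (ae_iff.mp (hμ.ae_kernel_apply_eq_one hB hμB))
    exact mt (hreal x).mpr hx.2
  have hVempty : V = ∅ := by
    by_contra hne
    have hVpos := hμ.measure_pos_of_forall_mem_pos hV.measurableSet hμO
      fun x hx => hirr x hx V hV Set.inter_subset_left (Set.nonempty_iff_ne_empty.mpr hne)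
    exact hVpos.ne' hμV
  intro x hx
  by_contra h
  exact hVempty.subset ⟨hx, mt (hreal x).mp h⟩

end IsStrongFeller

theorem unique_invariant_of_strongFeller_irreducible_general
    {U : Type*} [TopologicalSpace U]
    [MeasurableSpace (U ⊕ Unit)] [BorelSpace (U ⊕ Unit)]
    (κ : Kernel (U ⊕ Unit) (U ⊕ Unit)) [IsMarkovKernel κ]
    (hSF : IsStrongFeller κ)
    (hirr : ∀ u : U, ∀ A : Set (U ⊕ Unit),
      IsOpen A → A ⊆ Set.range Sum.inl → A.Nonempty → 0 < κ (Sum.inl u) A) :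
    ∀ μ ν : Measure (U ⊕ Unit), IsProbabilityMeasure μ → IsProbabilityMeasure ν →
      KernelInvariant κ μ → KernelInvariant κ ν →
      μ (Set.range Sum.inl) = 1 → ν (Set.range Sum.inl) = 1 → μ = ν := by
  intro μ ν _ _ hμ hν hμU hνU
  by_contra hne
  set O := Set.range (Sum.inl : U → U ⊕ Unit)
  have hO : IsOpen O := isOpen_range_inl
  have hirrO : ∀ x ∈ O, ∀ V : Set (U ⊕ Unit), IsOpen V → V ⊆ O → V.Nonempty → 0 < κ x V := by
    rintro _ ⟨u, rfl⟩
    exact hirr u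
  have huniv : μ Set.univ = ν Set.univ := by simp
  have hμνO : 0 < (μ - ν) O := Measure.sub_apply_pos_of_ne hne huniv
    ((prob_compl_eq_zero_iff hO.measurableSet).mpr hμU)
  have hνμO : 0 < (ν - μ) O := Measure.sub_apply_pos_of_ne (Ne.symm hne) huniv.symm
    ((prob_compl_eq_zero_iff hO.measurableSet).mpr hνU)
  obtain ⟨s, hs, hμνs, hνμs⟩ := Measure.mutually_singular_measure_sub (μ := μ) (ν := ν)
  obtain ⟨x, hxO⟩ := nonempty_of_measure_ne_zero hμνO.ne'
  have hsc := hSF.apply_eq_one_of_invariant hO hirrO (hμ.sub hν) hμνO hs.compl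
    (by rwa [compl_compl]) x hxO
  have hs1 := hSF.apply_eq_one_of_invariant hO hirrO (hν.sub hμ) hνμO hs hνμs x hxO
  have htot := measure_add_measure_compl (μ := κ x) hs
  norm_num [hsc, hs1] at htot

/-- Let `U` be a Polish space and `Ū = U ⊕ Unit` the Polish space obtained
by adjoining an isolated death state `† = Sum.inr ()`.  If a Markov kernel `κ` on `Ū` is
strong Feller, absorbing at `†`, and irreducible on `U` (every nonempty open subset of `U`
is charged from every point of `U`), then `κ` has at most one invariant probability
measure giving full mass to `U`. -/
theorem unique_invariant_of_strongFeller_irreducible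
    {U : Type*} [TopologicalSpace U] [PolishSpace U]
    [MeasurableSpace (U ⊕ Unit)] [BorelSpace (U ⊕ Unit)]
    (κ : Kernel (U ⊕ Unit) (U ⊕ Unit)) [IsMarkovKernel κ]
    (hSF : IsStrongFeller κ)
    (habs : κ (Sum.inr ()) {Sum.inr ()} = 1)
    (hirr : ∀ u : U, ∀ A : Set (U ⊕ Unit),
      IsOpen A → A ⊆ Set.range Sum.inl → A.Nonempty → 0 < κ (Sum.inl u) A) :
    ∀ μ ν : Measure (U ⊕ Unit), IsProbabilityMeasure μ → IsProbabilityMeasure ν →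
      KernelInvariant κ μ → KernelInvariant κ ν →
      μ (Set.range Sum.inl) = 1 → ν (Set.range Sum.inl) = 1 → μ = ν :=
  unique_invariant_of_strongFeller_irreducible_general κ hSF hirr
end

section
/- Let κ be a Markov kernel on a Polish space X which is strong Feller. Then κ admits at most countably many ergodic invariant probability measures; that is, the set of ergodic invariant probability measures of κ is countable. -/
/-!
Distinct ergodic invariant probability measures `μ ≠ ν` are mutually singular: the superlevel
sets of the density `dμ/d(μ + ν)` are absorbing, so by ergodicity this density is a.e. constant
under `μ` and under `ν`, and equal constants would force `μ = ν`. For a strong Feller kernel the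
map `x ↦ κ(x, A)` is continuous, so it vanishes on the support of every invariant measure giving
`A` mass zero; applied to `A` and `Aᶜ` for a set separating `μ` and `ν`, their supports are
disjoint. Hence the open sets `{x | κ(x, supp μ) > 1/2}`, which contain `supp μ`, are nonempty
and pairwise disjoint, and a separable space has only countably many such sets.
-/

open MeasureTheory ProbabilityTheory

open Filter Set
open scoped ENNReal

section Kernel

variable {X : Type*} [MeasurableSpace X] {κ : Kernel X X} {μ ν ρ : Measure X} {A : Set X}

namespace KernelInvariant

lemma add (hμ : KernelInvariant κ μ) (hν : KernelInvariant κ ν) : KernelInvariant κ (μ + ν) :=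
  fun A hA => by rw [Measure.add_apply, lintegral_add_measure, hμ A hA, hν A hA]

lemma ae_kernel_apply_eq_zero (hμ : KernelInvariant κ μ) (hA : MeasurableSet A) (h0 : μ A = 0) :
    ∀ᵐ x ∂μ, κ x A = 0 :=
  (lintegral_eq_zero_iff (κ.measurable_coe hA)).mp ((hμ A hA).symm.trans h0)

lemma setLIntegral_one_sub_eq [IsMarkovKernel κ] [IsFiniteMeasure μ]
    (hμ : KernelInvariant κ μ) (hA : MeasurableSet A) :
    ∫⁻ x in A, 1 - κ x A ∂μ = ∫⁻ x in Aᶜ, κ x A ∂μ := by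
  have hk := κ.measurable_coe hA
  have h_stay : ∫⁻ x in A, κ x A ∂μ + ∫⁻ x in A, 1 - κ x A ∂μ = μ A := by
    rw [← lintegral_add_left hk]
    simp [add_tsub_cancel_of_le (prob_le_one : κ _ A ≤ 1)]
  have h_inv : ∫⁻ x in A, κ x A ∂μ + ∫⁻ x in Aᶜ, κ x A ∂μ = μ A := by
    rw [lintegral_add_compl _ hA, hμ A hA]
  have h_fin : ∫⁻ x in A, κ x A ∂μ ≠ ∞ :=
    ne_top_of_le_ne_top (measure_ne_top μ A) (h_stay ▸ le_self_add)
  exact (ENNReal.add_right_inj h_fin).mp (h_stay.trans h_inv.symm)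

lemma ae_kernel_apply_rnDeriv_superlevelSet_eq_one [IsMarkovKernel κ] [IsFiniteMeasure μ]
    [IsFiniteMeasure ρ] (hρ : KernelInvariant κ ρ) (hμ : KernelInvariant κ μ) (hμρ : μ ≪ ρ)
    (c : ℝ≥0∞) : ∀ᵐ x ∂ρ, c < μ.rnDeriv ρ x → κ x {y | c < μ.rnDeriv ρ y} = 1 := by
  set g := μ.rnDeriv ρ
  set A := {y | c < g y}
  have hg : Measurable g := Measure.measurable_rnDeriv μ ρ
  have hA : MeasurableSet A := measurableSet_lt measurable_const hg
  have hk := κ.measurable_coe hA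
  rcases eq_or_ne c ∞ with rfl | hc
  · simp
  -- Flux balance for `μ`, then `g ≤ c` off `A`, then flux balance for `ρ`.
  have h_le : ∫⁻ x in A, g x * (1 - κ x A) ∂ρ ≤ ∫⁻ x in A, c * (1 - κ x A) ∂ρ :=
    calc ∫⁻ x in A, g x * (1 - κ x A) ∂ρ
        = ∫⁻ x in Aᶜ, g x * κ x A ∂ρ := by
          rw [setLIntegral_rnDeriv_mul hμρ (f := fun x => 1 - κ x A)
              (measurable_const.sub hk).aemeasurable hA,
            setLIntegral_rnDeriv_mul hμρ hk.aemeasurable hA.compl, hμ.setLIntegral_one_sub_eq hA]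
      _ ≤ ∫⁻ x in Aᶜ, c * κ x A ∂ρ :=
          setLIntegral_mono (measurable_const.mul hk) fun x hx => by
            gcongr; exact not_lt.mp hx
      _ = ∫⁻ x in A, c * (1 - κ x A) ∂ρ := by
          rw [lintegral_const_mul _ hk,
            lintegral_const_mul (f := fun x => 1 - κ x A) _ (measurable_const.sub hk),
            hρ.setLIntegral_one_sub_eq hA]
  have h_fin : ∫⁻ x in A, c * (1 - κ x A) ∂ρ ≠ ∞ := by
    refine ne_top_of_le_ne_top (ENNReal.mul_ne_top hc (measure_ne_top ρ A)) ?_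
    calc ∫⁻ x in A, c * (1 - κ x A) ∂ρ ≤ ∫⁻ _ in A, c ∂ρ :=
          lintegral_mono fun x => mul_le_of_le_one_right' tsub_le_self
      _ = c * ρ A := setLIntegral_const A c
  have h_eq : ∀ᵐ x ∂ρ.restrict A, c * (1 - κ x A) = g x * (1 - κ x A) := by
    refine ae_eq_of_ae_le_of_lintegral_le ?_ h_fin
      (hg.mul (measurable_const.sub hk)).aemeasurable h_le
    filter_upwards [ae_restrict_mem hA] with x hx
    gcongr
    exact hx.le
  filter_upwards [(ae_restrict_iff' hA).mp h_eq] with x hx hcx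
  by_contra hne
  have h_pos : 1 - κ x A ≠ 0 := (tsub_pos_of_lt (lt_of_le_of_ne prob_le_one hne)).ne'
  exact hcx.ne ((ENNReal.mul_left_inj h_pos (ENNReal.sub_ne_top ENNReal.one_ne_top)).mp (hx hcx))

end KernelInvariant

namespace KernelErgodic

lemma ae_mem_or_ae_notMem [IsProbabilityMeasure μ] (hE : KernelErgodic κ μ)
    (hA : MeasurableSet A) (h_abs : ∀ᵐ x ∂μ, x ∈ A → κ x A = 1) :
    (∀ᵐ x ∂μ, x ∈ A) ∨ ∀ᵐ x ∂μ, x ∉ A := by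
  refine (hE A hA h_abs).symm.imp (fun h1 => ?_) measure_eq_zero_iff_ae_notMem.mp
  rw [← prob_compl_eq_zero_iff hA, measure_eq_zero_iff_ae_notMem] at h1
  simpa only [notMem_compl_iff] using h1

lemma exists_ae_eq_const [IsProbabilityMeasure μ] (hE : KernelErgodic κ μ) {g : X → ℝ≥0∞}
    (hg : Measurable g) (h_abs : ∀ c, ∀ᵐ x ∂μ, c < g x → κ x {y | c < g y} = 1) :
    ∃ a, g =ᵐ[μ] fun _ => a :=
  exists_eventuallyEq_const_of_forall_separating (· ∈ range (Ioi : ℝ≥0∞ → _)) <| by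
    rintro _ ⟨c, rfl⟩
    exact hE.ae_mem_or_ae_notMem (hg measurableSet_Ioi) (h_abs c)

end KernelErgodic

lemma eq_of_rnDeriv_add_ae_eq_const [IsProbabilityMeasure μ] [IsProbabilityMeasure ν]
    {a : ℝ≥0∞} (h : μ.rnDeriv (μ + ν) =ᵐ[μ + ν] fun _ => a) : μ = ν := by
  have hμ : μ = a • (μ + ν) := by
    rw [← withDensity_const, ← withDensity_congr_ae h,
      Measure.withDensity_rnDeriv_eq _ _ (Measure.AbsolutelyContinuous.rfl.add_right ν)]
  have ha : a = 2⁻¹ := by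
    refine ENNReal.eq_inv_of_mul_eq_one_left ?_
    rw [mul_two]
    simpa using (congrArg (· univ) hμ).symm
  ext s hs
  have h_s : 2⁻¹ * μ s + 2⁻¹ * μ s = 2⁻¹ * μ s + 2⁻¹ * ν s := by
    rw [← add_mul, ENNReal.inv_two_add_inv_two, one_mul]
    simpa [ha, mul_add] using congrArg (· s) hμ
  exact (ENNReal.mul_right_inj (by simp) (by simp)).mp
    ((ENNReal.add_right_inj (ENNReal.mul_ne_top (by simp) (measure_ne_top μ s))).mp h_s)

lemma KernelErgodic.mutuallySingular [IsMarkovKernel κ] [IsProbabilityMeasure μ]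
    [IsProbabilityMeasure ν] (hμI : KernelInvariant κ μ) (hνI : KernelInvariant κ ν)
    (hμE : KernelErgodic κ μ) (hνE : KernelErgodic κ ν) (hne : μ ≠ ν) : μ ⟂ₘ ν := by
  set g := μ.rnDeriv (μ + ν)
  have hg : Measurable g := Measure.measurable_rnDeriv _ _
  have h_abs := (hμI.add hνI).ae_kernel_apply_rnDeriv_superlevelSet_eq_one hμI
    (Measure.AbsolutelyContinuous.rfl.add_right ν)
  obtain ⟨a, ha⟩ := hμE.exists_ae_eq_const hg fun c =>
    Measure.AbsolutelyContinuous.rfl.add_right ν |>.ae_le (h_abs c)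
  obtain ⟨b, hb⟩ := hνE.exists_ae_eq_const hg fun c =>
    Measure.AbsolutelyContinuous.rfl.add_right' μ |>.ae_le (h_abs c)
  have hab : a ≠ b := by
    rintro rfl
    exact hne (eq_of_rnDeriv_add_ae_eq_const (ae_add_measure_iff.mpr ⟨ha, hb⟩))
  refine ⟨g ⁻¹' {a}ᶜ, (hg (measurableSet_singleton a)).compl, ?_, ?_⟩
  · exact measure_eq_zero_iff_ae_notMem.mpr (ha.mono fun x hx => by simp [hx])
  · exact measure_eq_zero_iff_ae_notMem.mpr (hb.mono fun x hx => by simp [hx, hab.symm])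

end Kernel

lemma Continuous.eqOn_support_of_ae_eq_const {X Y : Type*} [TopologicalSpace X]
    [MeasurableSpace X] [TopologicalSpace Y] [T2Space Y] {μ : Measure X} {f : X → Y} {c : Y}
    (hf : Continuous f) (h : ∀ᵐ x ∂μ, f x = c) : EqOn f (fun _ => c) μ.support := by
  intro x hx
  by_contra hne
  exact Measure.notMem_support_iff_exists.mpr
    ⟨_, (isOpen_ne_fun hf continuous_const).mem_nhds hne, ae_iff.mp h⟩ hx

lemma disjoint_setOf_inv_two_lt {X : Type*} [MeasurableSpace X] {κ : Kernel X X}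
    [IsMarkovKernel κ] {S T : Set X} (hST : Disjoint S T) (hT : MeasurableSet T) :
    Disjoint {x | 2⁻¹ < κ x S} {x | 2⁻¹ < κ x T} := by
  refine Set.disjoint_left.mpr fun x hS hT' => ?_
  have h_sum : κ x S + κ x T ≤ 1 := measure_union hST hT ▸ prob_le_one
  have h_half : (1 : ℝ≥0∞) < κ x S + κ x T :=
    ENNReal.inv_two_add_inv_two ▸ ENNReal.add_lt_add hS hT'
  exact (h_half.trans_le h_sum).false

namespace IsStrongFeller

variable {X : Type*} [TopologicalSpace X] [MeasurableSpace X] {κ : Kernel X X} {μ ν : Measure X}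
  {A : Set X}

lemma continuous_apply [IsFiniteKernel κ] (hSF : IsStrongFeller κ) (hA : MeasurableSet A) :
    Continuous fun x => κ x A := by
  have h := hSF (A.indicator 1) (measurable_one.indicator hA)
    ⟨1, fun x => by by_cases hx : x ∈ A <;> simp [hx]⟩
  simp_rw [integral_indicator_one hA, measureReal_def] at h
  exact (ENNReal.continuous_ofReal.comp h).congr fun x =>
    ENNReal.ofReal_toReal (measure_ne_top _ _)

lemma apply_eq_zero_of_mem_support [IsFiniteKernel κ] (hSF : IsStrongFeller κ)
    (hμ : KernelInvariant κ μ) (hA : MeasurableSet A) (h0 : μ A = 0) :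
    ∀ x ∈ μ.support, κ x A = 0 :=
  (hSF.continuous_apply hA).eqOn_support_of_ae_eq_const (hμ.ae_kernel_apply_eq_zero hA h0)

lemma apply_support_eq_one_of_mem_support [IsMarkovKernel κ] [HereditarilyLindelofSpace X]
    [OpensMeasurableSpace X] (hSF : IsStrongFeller κ) (hμ : KernelInvariant κ μ) :
    ∀ x ∈ μ.support, κ x μ.support = 1 := fun x hx =>
  (prob_compl_eq_zero_iff Measure.isClosed_support.measurableSet).mp <|
    hSF.apply_eq_zero_of_mem_support hμ Measure.isClosed_support.measurableSet.compl
      Measure.measure_compl_support x hx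

lemma disjoint_support_of_mutuallySingular [IsMarkovKernel κ] (hSF : IsStrongFeller κ)
    (hμ : KernelInvariant κ μ) (hν : KernelInvariant κ ν) (hμν : μ ⟂ₘ ν) :
    Disjoint μ.support ν.support := by
  obtain ⟨s, hs, hμs, hνs⟩ := hμν
  refine Set.disjoint_left.mpr fun x hxμ hxν => ?_
  have h_total := measure_add_measure_compl (μ := κ x) hs
  rw [hSF.apply_eq_zero_of_mem_support hμ hs hμs x hxμ,
    hSF.apply_eq_zero_of_mem_support hν hs.compl hνs x hxν, add_zero, measure_univ] at h_total
  exact zero_ne_one h_total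

end IsStrongFeller

/-- A strong Feller Markov kernel on a Polish space has at most countably
many ergodic invariant probability measures. -/
theorem countable_ergodic_invariant_of_strongFeller
    {X : Type*} [TopologicalSpace X] [PolishSpace X] [MeasurableSpace X] [BorelSpace X]
    (κ : Kernel X X) [IsMarkovKernel κ] (hSF : IsStrongFeller κ) :
    {μ : Measure X |
      IsProbabilityMeasure μ ∧ KernelInvariant κ μ ∧ KernelErgodic κ μ}.Countable := by
  refine PairwiseDisjoint.countable_of_isOpen
    (s := fun μ : Measure X => {x | 2⁻¹ < κ x μ.support}) ?_ (fun μ _ => ?_) ?_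
  · rintro μ ⟨hμP, hμI, hμE⟩ ν ⟨hνP, hνI, hνE⟩ hne
    exact disjoint_setOf_inv_two_lt (hSF.disjoint_support_of_mutuallySingular hμI hνI
      (hμE.mutuallySingular hμI hνI hνE hne)) Measure.isClosed_support.measurableSet
  · exact isOpen_lt continuous_const (hSF.continuous_apply Measure.isClosed_support.measurableSet)
  · rintro μ ⟨hμP, hμI, -⟩
    obtain ⟨x, hx⟩ := Measure.nonempty_support (IsProbabilityMeasure.ne_zero μ)
    exact ⟨x, by simp [hSF.apply_support_eq_one_of_mem_support hμI x hx]⟩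
end

section
/- Let (Ω, ℱ, P) be a probability space, let σ ⊆ ℱ be a sub-σ-algebra, let Y be a Polish space equipped with a fixed complete metric inducing its topology, and let W : Ω → Y be a Borel measurable random variable such that, for every bounded uniformly continuous function f : Y → ℝ, one has E[f(W)² | σ] = (E[f(W) | σ])² P-almost surely. Then W is P-almost surely equal to a σ-measurable random variable; that is, there exists a σ-measurable map W̃ : Ω → Y with W = W̃ P-almost surely. -/
open MeasureTheory

private lemma pi_meas_aux {Ω : Type*} [m : MeasurableSpace Ω] (g : ℕ → Ω → ℝ)
    (hg : ∀ n, Measurable (g n)) : Measurable (fun ω n => g n ω) :=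
  measurable_pi_lambda _ hg

private lemma key_ae_eq_condexp {Ω : Type*} {m m0 : MeasurableSpace Ω} (hm : m ≤ m0)
    (P : Measure Ω) [IsProbabilityMeasure P] (X : Ω → ℝ) (hX : Measurable X)
    (C : NNReal) (hb : ∀ ω, |X ω| ≤ C)
    (hc : P[fun ω => (X ω) ^ 2|m] =ᵐ[P] fun ω => ((P[X|m]) ω) ^ 2) :
    X =ᵐ[P] P[X|m] := by
  set Y := P[X|m] with hYdef
  have hXi : Integrable X P := by
    refine (integrable_const (C : ℝ)).mono' hX.aestronglyMeasurable
      (Filter.Eventually.of_forall fun ω => ?_)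
    simpa [Real.norm_eq_abs] using hb ω
  have hX2i : Integrable (fun ω => (X ω) ^ 2) P := by
    refine (integrable_const ((C : ℝ) ^ 2)).mono'
      ((hX.pow_const 2).aestronglyMeasurable) (Filter.Eventually.of_forall fun ω => ?_)
    have := hb ω
    simp only [Real.norm_eq_abs, abs_pow]
    exact pow_le_pow_left₀ (abs_nonneg _) this 2
  have hYb : ∀ᵐ ω ∂P, |Y ω| ≤ C :=
    ae_bdd_condExp_of_ae_bdd (Filter.Eventually.of_forall hb)
  have hYnorm : ∀ᵐ ω ∂P, ‖Y ω‖ ≤ (C : ℝ) := by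
    filter_upwards [hYb] with ω hω using by simpa [Real.norm_eq_abs] using hω
  have hYi : Integrable Y P := integrable_condExp
  have hYsm : StronglyMeasurable[m] Y := stronglyMeasurable_condExp
  have hYasm : AEStronglyMeasurable Y P := (hYsm.mono hm).aestronglyMeasurable
  have hYXi : Integrable (Y * X) P := hXi.bdd_mul hYasm hYnorm
  have hYYi : Integrable (Y * Y) P := hYi.bdd_mul hYasm hYnorm
  have hpull : P[Y * X|m] =ᵐ[P] Y * Y := by
    have := condExp_stronglyMeasurable_mul_of_bound hm hYsm hXi (C : ℝ) hYnorm
    simpa [hYdef] using this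
  have I1 : ∫ ω, (X ω) ^ 2 ∂P = ∫ ω, Y ω * Y ω ∂P := by
    rw [← integral_condExp hm (f := fun ω => (X ω) ^ 2)]
    refine integral_congr_ae (hc.trans ?_)
    exact Filter.Eventually.of_forall fun ω => by ring
  have I2 : ∫ ω, Y ω * X ω ∂P = ∫ ω, Y ω * Y ω ∂P := by
    have h2 : ∫ ω, (Y * X) ω ∂P = ∫ ω, (Y * Y) ω ∂P := by
      rw [← integral_condExp hm (f := Y * X) (μ := P)]
      exact integral_congr_ae hpull
    simpa [Pi.mul_apply] using h2
  have hYXi' : Integrable (fun ω => Y ω * X ω) P := hYXi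
  have hYYi' : Integrable (fun ω => Y ω * Y ω) P := hYYi
  have hA : Integrable (fun ω => (X ω) ^ 2 - 2 * (Y ω * X ω)) P :=
    hX2i.sub (hYXi'.const_mul 2)
  have hZi : Integrable (fun ω => (X ω - Y ω) ^ 2) P := by
    have hrw : (fun ω => (X ω - Y ω) ^ 2)
        = fun ω => ((X ω) ^ 2 - 2 * (Y ω * X ω)) + Y ω * Y ω := by
      funext ω; ring
    rw [hrw]
    exact hA.add hYYi'
  have hI0 : ∫ ω, (X ω - Y ω) ^ 2 ∂P = 0 := by
    have hrw : (fun ω => (X ω - Y ω) ^ 2)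
        = fun ω => ((X ω) ^ 2 - 2 * (Y ω * X ω)) + Y ω * Y ω := by
      funext ω; ring
    rw [hrw, integral_add hA hYYi', integral_sub hX2i (hYXi'.const_mul 2),
      integral_const_mul, I1, I2]
    ring
  have h0 : (fun ω => (X ω - Y ω) ^ 2) =ᵐ[P] 0 :=
    (integral_eq_zero_iff_of_nonneg (fun ω => sq_nonneg _) hZi).1 hI0
  filter_upwards [h0] with ω hω
  have : (X ω - Y ω) ^ 2 = 0 := hω
  have := pow_eq_zero_iff (n := 2) (by norm_num) |>.1 this
  linarith [this]

/-- Let `(Ω, ℱ, P)` be a probability space, `σ ⊆ ℱ` a sub-σ-algebra, `Y`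
a Polish space (with a fixed complete metric), and `W : Ω → Y` a Borel measurable random
variable such that `E[f(W)² | σ] = (E[f(W) | σ])²` a.s. for every bounded uniformly
continuous `f : Y → ℝ`.  Then `W` agrees `P`-almost surely with a `σ`-measurable
random variable. -/
theorem ae_eq_measurable_of_condexp_sq
    {Ω Y : Type*} {m m0 : MeasurableSpace Ω} (hm : m ≤ m0)
    [MetricSpace Y] [CompleteSpace Y] [TopologicalSpace.SeparableSpace Y]
    [MeasurableSpace Y] [BorelSpace Y]
    (P : Measure Ω) [IsProbabilityMeasure P]
    (W : Ω → Y) (hW : Measurable W)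
    (h : ∀ f : Y → ℝ, UniformContinuous f → (∃ C, ∀ y, |f y| ≤ C) →
      P[fun ω => (f (W ω)) ^ 2|m] =ᵐ[P] fun ω => ((P[fun ω => f (W ω)|m]) ω) ^ 2) :
    ∃ W' : Ω → Y, Measurable[m] W' ∧ W =ᵐ[P] W' := by
  -- Ω is nonempty, hence Y is nonempty
  have hΩ : Nonempty Ω := by
    by_contra hempty
    rw [not_nonempty_iff] at hempty
    have h1 : P Set.univ = 1 := measure_univ
    have h0 : (Set.univ : Set Ω) = ∅ := Set.univ_eq_empty_iff.2 hempty
    rw [h0, measure_empty] at h1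
    exact one_ne_zero h1.symm
  have hY : Nonempty Y := ⟨W (Classical.choice hΩ)⟩
  haveI := hY
  -- dense sequence and the separating family
  set u : ℕ → Y := TopologicalSpace.denseSeq Y with hu
  have hud : DenseRange u := TopologicalSpace.denseRange_denseSeq Y
  set f : ℕ → Y → ℝ := fun n y => min (dist y (u n)) 1 with hf
  have hf_lip : ∀ n, LipschitzWith 1 (f n) := fun n => by
    simpa using (LipschitzWith.dist_left (u n)).min (LipschitzWith.const (b := (1:ℝ)))
  have hf_uc : ∀ n, UniformContinuous (f n) := fun n => (hf_lip n).uniformContinuous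
  have hf_bd : ∀ n y, |f n y| ≤ 1 := fun n y => by
    rw [abs_le]
    constructor
    · have : (0:ℝ) ≤ min (dist y (u n)) 1 := le_min dist_nonneg zero_le_one
      linarith
    · exact min_le_right _ _
  -- the embedding into ℝ^ℕ
  set e : Y → ℕ → ℝ := fun y n => f n y with he
  have he_cont : Continuous e := by
    refine continuous_pi fun n => ?_
    exact (Continuous.dist continuous_id continuous_const).min continuous_const
  have he_inj : Function.Injective e := by
    intro y1 y2 hyy
    by_contra hne
    have hd : 0 < dist y1 y2 := dist_pos.2 hne
    set r : ℝ := min (dist y1 y2 / 2) (1 / 2) with hr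
    have hrpos : 0 < r := lt_min (by linarith) (by norm_num)
    obtain ⟨n, hn⟩ := (Metric.denseRange_iff.1 hud) y1 r hrpos
    have hlt1 : dist y1 (u n) < 1 := hn.trans_le ((min_le_right _ _).trans (by norm_num))
    have h1 : f n y1 = dist y1 (u n) := min_eq_left hlt1.le
    have h2 : f n y1 = f n y2 := congrFun hyy n
    have h3 : f n y2 < 1 := by rw [← h2, h1]; exact hlt1
    have h4 : f n y2 = dist y2 (u n) := by
      by_cases hge : 1 ≤ dist y2 (u n)
      · exfalso
        have : f n y2 = 1 := min_eq_right hge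
        rw [this] at h3; exact lt_irrefl _ h3
      · exact min_eq_left (not_le.mp hge).le
    have h5 : dist y2 (u n) < r := by rw [← h4, ← h2, h1]; exact hn
    have : dist y1 y2 ≤ dist y1 (u n) + dist (u n) y2 := dist_triangle _ _ _
    rw [dist_comm (u n) y2] at this
    have : dist y1 y2 < 2 * r := by linarith
    have : dist y1 y2 < dist y1 y2 :=
      this.trans_le (by have := min_le_left (dist y1 y2 / 2) (1/2); linarith)
    exact lt_irrefl _ this
  haveI : PolishSpace Y := inferInstance
  have hee : MeasurableEmbedding e := he_cont.measurable.measurableEmbedding he_inj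
  obtain ⟨r, hr_meas, hre⟩ := hee.exists_measurable_extend measurable_id (fun _ => hY)
  -- conditional expectations
  set g : ℕ → Ω → ℝ := fun n => P[fun ω => f n (W ω)|m] with hg
  have h_ae : ∀ n, (fun ω => f n (W ω)) =ᵐ[P] g n := fun n => by
    refine key_ae_eq_condexp hm P _ ((hf_uc n).continuous.measurable.comp hW) 1
      (fun ω => by simpa using hf_bd n (W ω)) ?_
    simpa using h (f n) (hf_uc n) ⟨1, hf_bd n⟩
  have hall : ∀ᵐ ω ∂P, ∀ n, f n (W ω) = g n ω := ae_all_iff.2 h_ae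
  set G : Ω → ℕ → ℝ := fun ω n => g n ω with hG
  have hg_sm : ∀ n, StronglyMeasurable[m] (g n) := fun n => stronglyMeasurable_condExp
  have hG_meas : Measurable[m] G :=
    pi_meas_aux (m := m) g fun n => (hg_sm n).measurable
  refine ⟨r ∘ G, hr_meas.comp hG_meas, ?_⟩
  filter_upwards [hall] with ω hω
  have hGe : G ω = e (W ω) := funext fun n => (hω n).symm
  calc W ω = id (W ω) := rfl
    _ = (r ∘ e) (W ω) := by rw [hre]
    _ = r (G ω) := by rw [hGe]; rfl
end
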